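/- Let n ≥ 2 and let (a_1, ..., a_n) be a smooth sequence of relatively prime positive integers, and let S = ⟨a_1, ..., a_n⟩. Then S is symmetric and S is cyclotomic. -/

import Mathlib

open Polynomial
open scoped Classical

/-- A numerical semigroup: a subset of `ℕ` containing `0`, closed under addition,
with finite complement in `ℕ`. -/
structure NumericalSemigroup where
  carrier : Set ℕ
  zero_mem : 0 ∈ carrier
  add_mem : ∀ ⦃a b : ℕ⦄, a ∈ carrier → b ∈ carrier → a + b ∈ carrier
  finite_compl : Set.Finite carrierᶜ

namespace NumericalSemigroup

/-- The Hilbert series `H_S(x) = Σ_{s ∈ S} x^s`. -/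
noncomputable def H (S : NumericalSemigroup) : PowerSeries ℤ :=
  PowerSeries.mk fun n => if n ∈ S.carrier then 1 else 0

/-- The Hilbert series evaluated at `x^w`: `H_S(x^w) = Σ_{s ∈ S} x^{w·s}`. -/
noncomputable def Hexp (S : NumericalSemigroup) (w : ℕ) : PowerSeries ℤ :=
  PowerSeries.mk fun n => if ∃ s ∈ S.carrier, n = w * s then 1 else 0

/-- The semigroup polynomial `P_S(x) = (1-x)·H_S(x) = 1 + (x-1)·Σ_{s ∉ S} x^s`. -/
noncomputable def P (S : NumericalSemigroup) : Polynomial ℤ :=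
  1 + (X - 1) * ∑ s ∈ S.finite_compl.toFinset, X ^ s

/-- The Frobenius number: the largest integer not in `S` (equal to `-1` when `S = ℕ`). -/
noncomputable def Frob (S : NumericalSemigroup) : ℤ :=
  (insert (-1 : ℤ) (S.finite_compl.toFinset.image fun n : ℕ => (n : ℤ))).max'
    (Finset.insert_nonempty _ _)

/-- The genus: the number of gaps of `S`. -/
noncomputable def genus (S : NumericalSemigroup) : ℕ := S.finite_compl.toFinset.card

/-- `S` viewed as a set of integers. -/
def intSet (S : NumericalSemigroup) : Set ℤ := (fun n : ℕ => (n : ℤ)) '' S.carrier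

/-- `S` is cyclotomic if every complex root of `P_S` lies in the closed unit disc. -/
def IsCyclotomicNS (S : NumericalSemigroup) : Prop :=
  ∀ z : ℂ, Polynomial.aeval z S.P = 0 → ‖z‖ ≤ 1

/-- `S` is symmetric if for every integer `z`, `z ∈ S ↔ F(S) - z ∉ S`. -/
def IsSymmetric (S : NumericalSemigroup) : Prop :=
  ∀ z : ℤ, z ∈ S.intSet ↔ S.Frob - z ∉ S.intSet

/-- The Apéry set of `S` with respect to `m`: elements `s ∈ S` with `s - m ∉ S`
(in particular all `s ∈ S` with `s < m`). -/
def Ap (S : NumericalSemigroup) (m : ℕ) : Set ℕ :=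
  {s ∈ S.carrier | ∀ t ∈ S.carrier, t + m ≠ s}

end NumericalSemigroup

/-- `d_k = gcd(a_1, …, a_k)`. -/
def dseq (a : ℕ → ℕ) (k : ℕ) : ℕ := (Finset.Icc 1 k).gcd a

/-- `c_k = d_{k-1} / d_k`. -/
def cseq (a : ℕ → ℕ) (k : ℕ) : ℕ := dseq a (k - 1) / dseq a k

/-- The numerical semigroup (as a set) generated by `a_1, …, a_k`. -/
def gen (a : ℕ → ℕ) (k : ℕ) : Set ℕ := ↑(AddSubmonoid.closure (a '' Set.Icc 1 k))

/-- The sequence `(a_1, …, a_n)` is smooth if `c_k·a_k ∈ ⟨a_1, …, a_{k-1}⟩` for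
every `k = 2, …, n`. -/
def SmoothSeq (a : ℕ → ℕ) (n : ℕ) : Prop :=
  ∀ k, 2 ≤ k → k ≤ n → cseq a k * a k ∈ gen a (k - 1)

/-!
Write `S_k = ⟨a_1, …, a_k⟩ ⊆ d_k ℤ`. The additive order of `a_{k+1}` modulo `d_k` is `c_{k+1}`,
so every `z ∈ d_{k+1} ℤ` is uniquely `t + r a_{k+1}` with `t ∈ d_k ℤ` and `0 ≤ r < c_{k+1}`, and
smoothness (`c_{k+1} a_{k+1} ∈ S_k`) makes `z ∈ S_{k+1}` equivalent to `t ∈ S_k`. Hence if `S_k`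
is symmetric about `F` inside `d_k ℤ`, then `S_{k+1}` is symmetric about `F + (c_{k+1} - 1) a_{k+1}`
inside `d_{k+1} ℤ`; the induction starts from `S_1 = a_1 ℕ`, symmetric about `-a_1`.
The same decomposition gives
`H_{S_{k+1}} = H_{S_k} · (1 + x^{a_{k+1}} + ⋯ + x^{(c_{k+1}-1) a_{k+1}})`, whence
`P_S · ∏ (1 - x^{a_j}) = (1 - x) · ∏_{j ≥ 2} (1 - x^{c_j a_j})`, and every root of `P_S` is a
root of unity.
-/

open Pointwise

theorem existsUnique_lt_dvd_sub_mul {d a : ℕ} (hd : d ≠ 0) {z : ℤ} (hz : (d.gcd a : ℤ) ∣ z) :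
    ∃! r : ℕ, r < d / d.gcd a ∧ (d : ℤ) ∣ z - r * a := by
  -- `z` is a multiple of `a` in `ZMod d` by Bézout, and `r ↦ r • a` is injective below the
  -- additive order `d / gcd d a` of `a`.
  have : NeZero d := ⟨hd⟩
  have hord : addOrderOf (a : ZMod d) = d / d.gcd a := ZMod.addOrderOf_coe a hd
  have hdvd_iff (r : ℕ) : (d : ℤ) ∣ z - r * a ↔ r • (a : ZMod d) = z := by
    rw [← ZMod.intCast_eq_intCast_iff_dvd_sub, nsmul_eq_mul]
    push_cast
    rfl
  have hmem : (z : ZMod d) ∈ AddSubgroup.zmultiples (a : ZMod d) := by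
    obtain ⟨w, rfl⟩ := hz
    refine ⟨Nat.gcdB d a * w, ?_⟩
    rw [Nat.gcd_eq_gcd_ab]
    push_cast
    rw [ZMod.natCast_self]
    ring
  classical
  obtain ⟨r, hr, hra⟩ := Finset.mem_image.1 (mem_zmultiples_iff_mem_range_addOrderOf.1 hmem)
  rw [Finset.mem_range, hord] at hr
  refine ⟨r, ⟨hr, (hdvd_iff r).2 hra⟩, fun r' ⟨hr', hr'a⟩ => ?_⟩
  exact nsmul_injOn_Iio_addOrderOf (by rwa [Set.mem_Iio, hord]) (by rwa [Set.mem_Iio, hord])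
    (((hdvd_iff r').1 hr'a).trans hra.symm)

theorem eq_of_add_mul_eq_add_mul {d a : ℕ} (hd : d ≠ 0) {t t' : ℤ} {r r' : ℕ}
    (ht : (d : ℤ) ∣ t) (ht' : (d : ℤ) ∣ t') (hr : r < d / d.gcd a) (hr' : r' < d / d.gcd a)
    (h : t + r * a = t' + r' * a) : t = t' ∧ r = r' := by
  have hgcd_dvd : (d.gcd a : ℤ) ∣ t + r * a :=
    dvd_add ((Int.natCast_dvd_natCast.2 (Nat.gcd_dvd_left d a)).trans ht)
      (dvd_mul_of_dvd_right (Int.natCast_dvd_natCast.2 (Nat.gcd_dvd_right d a)) _)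
  have hrr' : r = r' := (existsUnique_lt_dvd_sub_mul hd hgcd_dvd).unique
    ⟨hr, by simpa using ht⟩ ⟨hr', by simpa [h] using ht'⟩
  subst hrr'
  exact ⟨by linarith, rfl⟩

section GeneratedSemigroup

variable {a : ℕ → ℕ} {k : ℕ}

theorem gen_zero : gen a 0 = {0} := by
  simp [gen]

theorem gen_succ : gen a (k + 1) = gen a k + Set.range (· * a (k + 1)) := by
  rw [gen, ← Set.insert_Icc_right_eq_Icc_add_one (by omega), Set.image_insert_eq,
    Set.insert_eq, Set.union_comm, AddSubmonoid.closure_union, AddSubmonoid.coe_sup]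
  congr 1
  ext m
  simp [AddSubmonoid.mem_closure_singleton]

theorem gen_one : gen a 1 = Set.range (· * a 1) := by
  rw [gen_succ, gen_zero, Set.singleton_zero, zero_add]

theorem dseq_zero : dseq a 0 = 0 := rfl

theorem dseq_succ : dseq a (k + 1) = (dseq a k).gcd (a (k + 1)) := by
  rw [dseq, ← Finset.insert_Icc_right_eq_Icc_add_one (by omega), Finset.gcd_insert, Nat.gcd_comm]
  rfl

theorem dseq_ne_zero (ha : a 1 ≠ 0) (hk : 1 ≤ k) : dseq a k ≠ 0 := fun h =>
  ha (Finset.gcd_eq_zero_iff.1 h 1 (Finset.mem_Icc.2 ⟨le_rfl, hk⟩))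

theorem dseq_one : dseq a 1 = a 1 := by
  rw [dseq_succ, dseq_zero, Nat.gcd_zero_left]

theorem cseq_succ : cseq a (k + 1) = dseq a k / (dseq a k).gcd (a (k + 1)) := by
  rw [cseq, Nat.add_sub_cancel, dseq_succ]

theorem cseq_succ_pos (hd : dseq a k ≠ 0) : 0 < cseq a (k + 1) := by
  rw [cseq_succ]
  exact Nat.div_pos (Nat.gcd_le_left _ (Nat.pos_of_ne_zero hd))
    (Nat.gcd_pos_of_pos_left _ (Nat.pos_of_ne_zero hd))

theorem cseq_pos (ha : a 1 ≠ 0) (hk : 2 ≤ k) : 0 < cseq a k := by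
  obtain ⟨k, rfl⟩ : ∃ k', k = k' + 1 := ⟨k - 1, by omega⟩
  exact cseq_succ_pos (dseq_ne_zero ha (by omega))

theorem dseq_dvd_of_mem_gen {s : ℕ} (hs : s ∈ gen a k) : dseq a k ∣ s := by
  induction hs using AddSubmonoid.closure_induction with
  | mem x hx =>
    obtain ⟨j, hj, rfl⟩ := hx
    exact Finset.gcd_dvd (Finset.mem_Icc.2 hj)
  | zero => exact dvd_zero _
  | add x y _ _ hx hy => exact dvd_add hx hy

theorem gen_succ_eq_add_of_mul_mem {c : ℕ} (hc : 0 < c) (hca : c * a (k + 1) ∈ gen a k) :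
    gen a (k + 1) = gen a k + (· * a (k + 1)) '' Set.Iio c := by
  rw [gen_succ]
  refine (Set.add_subset_add_left (Set.image_subset_range _ _)).antisymm' ?_
  rintro _ ⟨t, ht, _, ⟨q, rfl⟩, rfl⟩
  refine ⟨t + (q / c) * (c * a (k + 1)), ?_, _, ⟨q % c, Nat.mod_lt q hc, rfl⟩, ?_⟩
  · exact AddSubmonoid.add_mem _ ht (AddSubmonoid.nsmul_mem _ hca _)
  · dsimp only
    conv_rhs => rw [← Nat.div_add_mod q c]
    ring

theorem natCast_add_mul_mem_gen_succ_iff (hd : dseq a k ≠ 0)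
    (hsm : cseq a (k + 1) * a (k + 1) ∈ gen a k) {t : ℤ} (ht : (dseq a k : ℤ) ∣ t) {r : ℕ}
    (hr : r < cseq a (k + 1)) :
    t + r * a (k + 1) ∈ ((↑) : ℕ → ℤ) '' gen a (k + 1) ↔ t ∈ ((↑) : ℕ → ℤ) '' gen a k := by
  rw [gen_succ_eq_add_of_mul_mem (cseq_succ_pos hd) hsm]
  constructor
  · rintro ⟨_, ⟨s, hs, _, ⟨r', hr', rfl⟩, rfl⟩, hst⟩
    rw [cseq_succ] at hr hr'
    have := eq_of_add_mul_eq_add_mul hd ht (Int.natCast_dvd_natCast.2 (dseq_dvd_of_mem_gen hs))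
      hr hr' (by rw [← hst]; push_cast; rfl)
    exact ⟨s, hs, this.1.symm⟩
  · rintro ⟨s, hs, rfl⟩
    exact ⟨s + r * a (k + 1), Set.add_mem_add hs ⟨r, hr, rfl⟩, by push_cast; rfl⟩

theorem add_injOn_gen_prod_image_mul (hd : dseq a k ≠ 0) :
    Set.InjOn (fun p : ℕ × ℕ => p.1 + p.2)
      (gen a k ×ˢ ((· * a (k + 1)) '' Set.Iio (cseq a (k + 1)))) := by
  rintro ⟨s, _⟩ ⟨hs, r, hr, rfl⟩ ⟨s', _⟩ ⟨hs', r', hr', rfl⟩ h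
  rw [cseq_succ] at hr hr'
  have := eq_of_add_mul_eq_add_mul hd (Int.natCast_dvd_natCast.2 (dseq_dvd_of_mem_gen hs))
    (Int.natCast_dvd_natCast.2 (dseq_dvd_of_mem_gen hs')) hr hr' (by exact_mod_cast h)
  obtain ⟨hss', rfl⟩ := this
  exact Prod.ext (Nat.cast_injective hss') rfl

end GeneratedSemigroup

def IsSymmetricWithin (d : ℕ) (F : ℤ) (T : Set ℤ) : Prop :=
  (d : ℤ) ∣ F ∧ ∀ z : ℤ, (d : ℤ) ∣ z → (z ∈ T ↔ F - z ∉ T)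

theorem IsSymmetricWithin.glue {d a : ℕ} {F : ℤ} {T U : Set ℤ} (hT : IsSymmetricWithin d F T)
    (hd : d ≠ 0)
    (hU : ∀ t : ℤ, (d : ℤ) ∣ t → ∀ r < d / d.gcd a, (t + r * a ∈ U ↔ t ∈ T)) :
    IsSymmetricWithin (d.gcd a) (F + ((d / d.gcd a : ℕ) - 1 : ℤ) * a) U := by
  have hgd : (d.gcd a : ℤ) ∣ d := Int.natCast_dvd_natCast.2 (Nat.gcd_dvd_left d a)
  have hga : (d.gcd a : ℤ) ∣ a := Int.natCast_dvd_natCast.2 (Nat.gcd_dvd_right d a)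
  refine ⟨dvd_add (hgd.trans hT.1) (dvd_mul_of_dvd_right hga _), fun z hz => ?_⟩
  obtain ⟨r, ⟨hr, hdvd⟩, -⟩ := existsUnique_lt_dvd_sub_mul hd hz
  obtain ⟨t, ht, rfl⟩ : ∃ t : ℤ, (d : ℤ) ∣ t ∧ z = t + r * a := ⟨z - r * a, hdvd, by ring⟩
  have hFz : F + ((d / d.gcd a : ℕ) - 1 : ℤ) * a - (t + r * a)
      = (F - t) + ((d / d.gcd a - 1 - r : ℕ) : ℤ) * a := by
    push_cast [Nat.sub_sub, Nat.cast_sub (show 1 + r ≤ d / d.gcd a by omega)]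
    ring
  rw [hFz, hU t ht r hr, hU (F - t) (dvd_sub hT.1 ht) _ (by omega)]
  exact hT.2 t ht

theorem isSymmetricWithin_gen_one {a : ℕ → ℕ} (ha : a 1 ≠ 0) :
    IsSymmetricWithin (a 1) (-a 1) (((↑) : ℕ → ℤ) '' gen a 1) := by
  have hmem_iff (w : ℤ) : (a 1 : ℤ) * w ∈ ((↑) : ℕ → ℤ) '' gen a 1 ↔ 0 ≤ w := by
    rw [gen_one]
    constructor
    · rintro ⟨_, ⟨q, rfl⟩, hq⟩
      have : (q : ℤ) = w :=
        mul_left_cancel₀ (Int.natCast_ne_zero.2 ha) (by push_cast at hq; linarith)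
      omega
    · intro hw
      exact ⟨w.toNat * a 1, ⟨_, rfl⟩, by push_cast [Int.toNat_of_nonneg hw]; ring⟩
  refine ⟨dvd_neg.2 dvd_rfl, ?_⟩
  rintro _ ⟨w, rfl⟩
  rw [show -(a 1 : ℤ) - a 1 * w = a 1 * (-1 - w) by ring, hmem_iff, hmem_iff]
  omega

theorem exists_isSymmetricWithin_gen {a : ℕ → ℕ} {n : ℕ} (ha : a 1 ≠ 0) (hsmooth : SmoothSeq a n)
    {k : ℕ} (hk : 1 ≤ k) (hkn : k ≤ n) :
    ∃ F, IsSymmetricWithin (dseq a k) F (((↑) : ℕ → ℤ) '' gen a k) := by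
  induction k, hk using Nat.le_induction with
  | base => exact ⟨_, dseq_one (a := a) ▸ isSymmetricWithin_gen_one ha⟩
  | succ k hk ih =>
    obtain ⟨F, hF⟩ := ih (by omega)
    have hd := dseq_ne_zero ha hk
    have hsm : cseq a (k + 1) * a (k + 1) ∈ gen a k := hsmooth (k + 1) (by omega) hkn
    refine ⟨_, dseq_succ (a := a) ▸ hF.glue hd fun t ht r hr => ?_⟩
    rw [← cseq_succ] at hr
    exact natCast_add_mul_mem_gen_succ_iff hd hsm ht hr

namespace NumericalSemigroup

theorem frob_eq_of_forall_mem_intSet_iff (S : NumericalSemigroup) {F : ℤ}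
    (h : ∀ z, z ∈ S.intSet ↔ F - z ∉ S.intSet) : S.Frob = F := by
  have hnonneg : ∀ z ∈ S.intSet, 0 ≤ z := by
    rintro _ ⟨s, -, rfl⟩
    positivity
  have hle : ∀ z ∉ S.intSet, z ≤ F := fun z hz => by
    have := hnonneg _ (not_not.1 (mt (h z).2 hz))
    omega
  have hneg : ∀ z < 0, z ∉ S.intSet := fun z hz hmem => by
    have := hnonneg z hmem
    omega
  have hgap : ∀ m : ℕ, (m : ℤ) ∉ S.intSet ↔ m ∈ S.finite_compl.toFinset := fun m => by
    simp [intSet]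
  refine le_antisymm (Finset.max'_le _ _ _ fun x hx => ?_) (Finset.le_max' _ _ ?_)
  · rcases Finset.mem_insert.1 hx with rfl | hx
    · exact hle _ (hneg _ (by norm_num))
    · obtain ⟨m, hm, rfl⟩ := Finset.mem_image.1 hx
      exact hle _ ((hgap m).2 hm)
  · have hF : F ∉ S.intSet := by simpa using (h 0).1 ⟨0, S.zero_mem, rfl⟩
    rcases lt_or_ge F 0 with hF0 | hF0
    · rw [show F = -1 by linarith [hle (-1) (hneg _ (by norm_num))]]
      exact Finset.mem_insert_self _ _
    · refine Finset.mem_insert_of_mem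
        (Finset.mem_image.2 ⟨F.toNat, (hgap _).1 ?_, Int.toNat_of_nonneg hF0⟩)
      rwa [Int.toNat_of_nonneg hF0]

theorem isSymmetric_of_forall_mem_intSet_iff (S : NumericalSemigroup) {F : ℤ}
    (h : ∀ z, z ∈ S.intSet ↔ F - z ∉ S.intSet) : S.IsSymmetric := by
  rw [IsSymmetric, S.frob_eq_of_forall_mem_intSet_iff h]
  exact h

end NumericalSemigroup

section IndicatorSeries

open PowerSeries (coeff)

noncomputable def indicatorSeries (A : Set ℕ) : PowerSeries ℤ :=
  PowerSeries.mk fun m => if m ∈ A then 1 else 0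

theorem coeff_indicatorSeries (A : Set ℕ) (m : ℕ) :
    coeff m (indicatorSeries A) = if m ∈ A then 1 else 0 :=
  PowerSeries.coeff_mk _ _

theorem indicatorSeries_add {A B : Set ℕ}
    (h : Set.InjOn (fun p : ℕ × ℕ => p.1 + p.2) (A ×ˢ B)) :
    indicatorSeries (A + B) = indicatorSeries A * indicatorSeries B := by
  ext m
  simp only [PowerSeries.coeff_mul, coeff_indicatorSeries, boole_mul, ← ite_and]
  by_cases hm : m ∈ A + B
  · obtain ⟨x, hx, y, hy, rfl⟩ := hm
    rw [if_pos (Set.add_mem_add hx hy), Finset.sum_eq_single_of_mem (x, y)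
      (Finset.HasAntidiagonal.mem_antidiagonal.2 rfl), if_pos ⟨hx, hy⟩]
    rintro p hp hpxy
    exact if_neg fun hpAB => hpxy (h hpAB ⟨hx, hy⟩ (Finset.HasAntidiagonal.mem_antidiagonal.1 hp))
  · rw [if_neg hm, Finset.sum_eq_zero]
    rintro p hp
    exact if_neg fun ⟨hpA, hpB⟩ =>
      hm ⟨p.1, hpA, p.2, hpB, Finset.HasAntidiagonal.mem_antidiagonal.1 hp⟩

theorem indicatorSeries_coe_finset (s : Finset ℕ) :
    indicatorSeries ↑s = ∑ b ∈ s, PowerSeries.X ^ b := by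
  ext m
  simp [coeff_indicatorSeries, PowerSeries.coeff_X_pow, map_sum]

theorem indicatorSeries_image_mul_Iio_mul {a : ℕ} (ha : a ≠ 0) (c : ℕ) :
    indicatorSeries ((· * a) '' Set.Iio c) * (1 - PowerSeries.X ^ a)
      = 1 - PowerSeries.X ^ (c * a) := by
  have hinj : Set.InjOn (· * a) ↑(Finset.range c) := fun x _ y _ h =>
    Nat.eq_of_mul_eq_mul_right (Nat.pos_of_ne_zero ha) h
  rw [← Finset.coe_range, ← Finset.coe_image, indicatorSeries_coe_finset, Finset.sum_image hinj]
  simp_rw [pow_mul']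
  exact geom_sum_mul_neg _ _

theorem indicatorSeries_range_mul_mul {a : ℕ} (ha : a ≠ 0) :
    indicatorSeries (Set.range (· * a)) * (1 - PowerSeries.X ^ a) = 1 := by
  have hmem (m : ℕ) : m ∈ Set.range (· * a) ↔ a ∣ m := by
    simp [Dvd.dvd, eq_comm, mul_comm]
  ext m
  rw [mul_sub, mul_one, map_sub, PowerSeries.coeff_mul_X_pow', coeff_indicatorSeries,
    coeff_indicatorSeries, PowerSeries.coeff_one, hmem, hmem]
  rcases Nat.eq_zero_or_pos m with rfl | hm
  · simp [ha]
  · by_cases ham : a ≤ m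
    · rw [if_pos ham, Nat.dvd_sub_iff_left ham dvd_rfl, if_neg hm.ne']
      split_ifs <;> rfl
    · simp [ham, hm.ne', mt (Nat.le_of_dvd hm) ham]

theorem indicatorSeries_gen_mul_prod {a : ℕ → ℕ} {n : ℕ} (hpos : ∀ i, 1 ≤ i → i ≤ n → 0 < a i)
    (hsmooth : SmoothSeq a n) {k : ℕ} (hk : 1 ≤ k) (hkn : k ≤ n) :
    indicatorSeries (gen a k) * ∏ j ∈ Finset.Icc 1 k, (1 - PowerSeries.X ^ a j)
      = ∏ j ∈ Finset.Icc 2 k, (1 - PowerSeries.X ^ (cseq a j * a j)) := by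
  induction k, hk using Nat.le_induction with
  | base => simp [gen_one, indicatorSeries_range_mul_mul (hpos 1 le_rfl hkn).ne']
  | succ k hk ih =>
    have hd := dseq_ne_zero (hpos 1 le_rfl (by omega)).ne' hk
    have hsm : cseq a (k + 1) * a (k + 1) ∈ gen a k := hsmooth (k + 1) (by omega) hkn
    rw [gen_succ_eq_add_of_mul_mem (cseq_succ_pos hd) hsm,
      indicatorSeries_add (add_injOn_gen_prod_image_mul hd), Finset.prod_Icc_succ_top (by omega),
      Finset.prod_Icc_succ_top (by omega), ← ih (by omega),
      ← indicatorSeries_image_mul_Iio_mul (hpos (k + 1) (by omega) hkn).ne']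
    ring

end IndicatorSeries

namespace NumericalSemigroup

theorem coe_P (S : NumericalSemigroup) :
    (S.P : PowerSeries ℤ) = (1 - PowerSeries.X) * indicatorSeries S.carrier := by
  have hH : indicatorSeries S.carrier
      = PowerSeries.mk 1 - ∑ s ∈ S.finite_compl.toFinset, PowerSeries.X ^ s := by
    rw [← indicatorSeries_coe_finset, Set.Finite.coe_toFinset]
    ext m
    by_cases hm : m ∈ S.carrier <;> simp [coeff_indicatorSeries, hm]
  rw [hH, P]
  simp only [← Polynomial.coeToPowerSeries.ringHom_apply, map_add, map_mul, map_sub, map_one,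
    map_sum, map_pow]
  rw [Polynomial.coeToPowerSeries.ringHom_apply, Polynomial.coe_X]
  linear_combination (PowerSeries.mk_one_mul_one_sub_eq_one ℤ).symm

theorem P_mul_prod_eq_of_smoothSeq {a : ℕ → ℕ} {n : ℕ}
    (hpos : ∀ i, 1 ≤ i → i ≤ n → 0 < a i) (hsmooth : SmoothSeq a n) (hn : 1 ≤ n) (S : NumericalSemigroup) (hS : S.carrier = gen a n) :
    S.P * ∏ j ∈ Finset.Icc 1 n, (1 - X ^ a j)
      = (1 - X) * ∏ j ∈ Finset.Icc 2 n, (1 - X ^ (cseq a j * a j)) := by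
  apply Polynomial.coe_inj.1
  simp only [← Polynomial.coeToPowerSeries.ringHom_apply, map_mul, map_sub, map_one, map_prod,
    map_pow]
  simp only [Polynomial.coeToPowerSeries.ringHom_apply, Polynomial.coe_X]
  rw [S.coe_P, hS, mul_assoc, indicatorSeries_gen_mul_prod hpos hsmooth hn le_rfl]

end NumericalSemigroup

theorem norm_eq_one_of_aeval_eq_zero_of_dvd {p : Polynomial ℤ} {s : Finset ℕ} {m : ℕ → ℕ}
    (hm : ∀ j ∈ s, m j ≠ 0) (hp : p ∣ (1 - X) * ∏ j ∈ s, (1 - X ^ m j)) {z : ℂ}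
    (hz : aeval z p = 0) : ‖z‖ = 1 := by
  obtain ⟨q, hq⟩ := hp
  have hprod := congrArg (aeval z) hq
  simp only [map_mul, map_sub, map_one, map_prod, map_pow, aeval_X, hz, zero_mul] at hprod
  rcases mul_eq_zero.1 hprod with h1 | hprod
  · simp [← sub_eq_zero.1 h1]
  · obtain ⟨j, hj, hzj⟩ := Finset.prod_eq_zero_iff.1 hprod
    exact Complex.norm_eq_one_of_pow_eq_one (sub_eq_zero.1 hzj).symm (hm j hj)

open NumericalSemigroup in
theorem smooth_symmetric_and_cyclotomic_general (n : ℕ) (a : ℕ → ℕ)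
    (hpos : ∀ i, 1 ≤ i → i ≤ n → 0 < a i) (hgcd : dseq a n = 1) (hsmooth : SmoothSeq a n)
    (S : NumericalSemigroup) (hS : S.carrier = gen a n) :
    S.IsSymmetric ∧ S.IsCyclotomicNS := by
  have hn1 : 1 ≤ n := Nat.pos_of_ne_zero fun h => by simp [h, dseq_zero] at hgcd
  have ha1 : a 1 ≠ 0 := (hpos 1 le_rfl hn1).ne'
  constructor
  · obtain ⟨F, -, hF⟩ := exists_isSymmetricWithin_gen ha1 hsmooth hn1 le_rfl
    refine S.isSymmetric_of_forall_mem_intSet_iff (F := F) fun z => ?_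
    rw [intSet, hS]
    exact hF z (by rw [hgcd, Nat.cast_one]; exact one_dvd z)
  · intro z hz
    refine (norm_eq_one_of_aeval_eq_zero_of_dvd (fun j hj => ?_)
      ⟨_, (P_mul_prod_eq_of_smoothSeq hpos hsmooth hn1 S hS).symm⟩ hz).le
    obtain ⟨hj2, hjn⟩ := Finset.mem_Icc.1 hj
    exact Nat.mul_ne_zero (cseq_pos ha1 hj2).ne' (hpos j (by omega) hjn).ne'

open NumericalSemigroup in
/-- For a smooth sequence `(a_1, …, a_n)` of relatively prime positive integers and
`S = ⟨a_1, …, a_n⟩`: `S` is symmetric and `S` is cyclotomic. -/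
theorem smooth_symmetric_and_cyclotomic (n : ℕ) (hn : 2 ≤ n) (a : ℕ → ℕ)
    (hpos : ∀ i, 1 ≤ i → i ≤ n → 0 < a i) (hgcd : dseq a n = 1) (hsmooth : SmoothSeq a n)
    (S : NumericalSemigroup) (hS : S.carrier = gen a n) :
    S.IsSymmetric ∧ S.IsCyclotomicNS :=
  smooth_symmetric_and_cyclotomic_general n a hpos hgcd hsmooth S hS
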